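/- arXiv:2104.03532 — 3 statements merged into one kernel-verified Lean document; each statement's English description precedes it below -/
import Mathlib

section
/- (Invariance of the VIO dynamics, Proposition 1, part 1.) Let S = (R_S, x_S) ∈ SE_{e₃}(3) be fixed. If a differentiable trajectory t ↦ (R_P(t), x_P(t), v(t), p₁(t), …, pₙ(t)) solves the VIO dynamics for inputs Ω(t), a(t), then the transformed trajectory t ↦ (R_Sᵀ R_P(t), R_Sᵀ(x_P(t) − x_S), v(t), R_Sᵀ(p₁(t) − x_S), …, R_Sᵀ(pₙ(t) − x_S)) also solves the VIO dynamics for the same inputs Ω(t), a(t). -/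
open scoped InnerProductSpace Matrix

noncomputable section

/-- Vectors in ℝ³ with the Euclidean norm. -/
abbrev V3 := EuclideanSpace ℝ (Fin 3)

abbrev Mat3 := Matrix (Fin 3) (Fin 3) ℝ

/-- `R ∈ SO(3)` iff `RᵀR = I` and `det R = 1`. -/
def SO3 (R : Mat3) : Prop := R.transpose * R = 1 ∧ R.det = 1

/-- Matrix-vector multiplication. -/
def mv (M : Mat3) (q : V3) : V3 := WithLp.toLp 2 (M.mulVec q)

/-- The standard gravity direction `e₃ = (0,0,1)`. -/
def e3 : V3 := WithLp.toLp 2 ![0, 0, 1]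

/-- Elements of SE(3) are pairs `(R, x)`. -/
abbrev SE3 := Mat3 × V3

/-- SE(3) group product: `(R₁,x₁)·(R₂,x₂) = (R₁R₂, x₁ + R₁x₂)`. -/
def seMul (P Q : SE3) : SE3 := (P.1 * Q.1, P.2 + mv P.1 Q.2)

/-- SE(3) identity `(I, 0)`. -/
def seId : SE3 := (1, 0)

/-- SE(3) inverse: `P⁻¹ = (Rᵀ, −Rᵀx)`. -/
def seInv (P : SE3) : SE3 := (P.1ᵀ, -(mv P.1ᵀ P.2))

/-- Action of SE(3) on ℝ³: `P(q) = R_P q + x_P`. -/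
def seAct (P : SE3) (q : V3) : V3 := mv P.1 q + P.2

/-- The subgroup `SE_{e₃}(3) = {(R,x) ∈ SE(3) : R e₃ = e₃}`. -/
def SEe3 : Set SE3 := {S | SO3 S.1 ∧ mv S.1 e3 = e3}

/-- The skew-symmetric matrix `Ω^×` with `Ω^× y = Ω × y`. -/
def skew (Ω : V3) : Mat3 := !![0, -Ω 2, Ω 1; Ω 2, 0, -Ω 0; -Ω 1, Ω 0, 0]

/-- The cross product on ℝ³. -/
def cross3 (a b : V3) : V3 := WithLp.toLp 2 (crossProduct a b)

attribute [local instance] Matrix.normedAddCommGroup Matrix.normedSpace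

/-! Left multiplication by the constant matrix `R_Sᵀ` is linear, so it commutes with time
derivatives. The gravity term is the only one not transformed along, and it is unchanged since
`(R_Sᵀ R_P)ᵀ e₃ = R_Pᵀ (R_S e₃) = R_Pᵀ e₃`. -/

theorem mv_mul (A B : Mat3) (q : V3) : mv (A * B) q = mv A (mv B q) := by
  simp only [mv, Matrix.mulVec_mulVec]

theorem mv_zero (M : Mat3) : mv M 0 = 0 :=
  map_zero (Matrix.toEuclideanLin M)

theorem mv_transpose_transpose_mul (A B : Mat3) (q : V3) :
    mv (Aᵀ * B)ᵀ q = mv Bᵀ (mv A q) := by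
  rw [Matrix.transpose_mul, Matrix.transpose_transpose, mv_mul]

theorem SO3.transpose_mul {A B : Mat3} (hA : SO3 A) (hB : SO3 B) : SO3 (Aᵀ * B) := by
  have hAAt : A * Aᵀ = 1 := mul_eq_one_comm.mp hA.1
  refine ⟨?_, by rw [Matrix.det_mul, Matrix.det_transpose, hA.2, hB.2, one_mul]⟩
  calc (Aᵀ * B)ᵀ * (Aᵀ * B) = Bᵀ * (A * Aᵀ) * B := by
        simp only [Matrix.transpose_mul, Matrix.transpose_transpose, Matrix.mul_assoc]
    _ = 1 := by rw [hAAt, Matrix.mul_one, hB.1]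

section Derivatives

variable {𝕜 E F : Type*} [NontriviallyNormedField 𝕜] [CompleteSpace 𝕜]
  [NormedAddCommGroup E] [NormedSpace 𝕜 E] [FiniteDimensional 𝕜 E]
  [NormedAddCommGroup F] [NormedSpace 𝕜 F] {f : 𝕜 → E} {f' : E} {t : 𝕜}

theorem HasDerivAt.linearMap_comp (L : E →ₗ[𝕜] F) (hf : HasDerivAt f f' t) :
    HasDerivAt (fun s => L (f s)) (L f') t :=
  (LinearMap.toContinuousLinearMap L).hasFDerivAt.comp_hasDerivAt t hf

end Derivatives

theorem HasDerivAt.mv_left {f : ℝ → V3} {f' : V3} {t : ℝ} (M : Mat3) (hf : HasDerivAt f f' t) :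
    HasDerivAt (fun s => mv M (f s)) (mv M f') t :=
  hf.linearMap_comp (Matrix.toEuclideanLin M)

theorem HasDerivAt.matrix_mul_left {ι : Type*} [Fintype ι] {f : ℝ → Matrix ι ι ℝ}
    {f' : Matrix ι ι ℝ} {t : ℝ} (M : Matrix ι ι ℝ) (hf : HasDerivAt f f' t) :
    HasDerivAt (fun s => M * f s) (M * f') t :=
  hf.linearMap_comp (LinearMap.mulLeft ℝ M)

/-- (Proposition 1, part 1.) If a differentiable trajectory
`t ↦ (R_P(t), x_P(t), v(t), pᵢ(t))` solves the VIO dynamics for inputs `Ω(t), a(t)`,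
then for any fixed `S = (R_S, x_S) ∈ SE_{e₃}(3)` the transformed trajectory
`t ↦ (R_Sᵀ R_P(t), R_Sᵀ(x_P(t) − x_S), v(t), R_Sᵀ(pᵢ(t) − x_S))` also solves the VIO
dynamics for the same inputs. -/
theorem vio_dynamics_invariant (n : ℕ) (g : ℝ) (Ω a : ℝ → V3)
    (S : SE3) (hS : S ∈ SEe3)
    (R : ℝ → Mat3) (x v : ℝ → V3) (p : Fin n → ℝ → V3)
    (hSO : ∀ t, SO3 (R t))
    (hR : ∀ t, HasDerivAt R (R t * skew (Ω t)) t)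
    (hx : ∀ t, HasDerivAt x (mv (R t) (v t)) t)
    (hv : ∀ t, HasDerivAt v (-cross3 (Ω t) (v t) + a t - g • mv (R t)ᵀ e3) t)
    (hp : ∀ i, ∀ t, HasDerivAt (p i) 0 t) :
    (∀ t, SO3 (S.1ᵀ * R t)) ∧
    (∀ t, HasDerivAt (fun s => S.1ᵀ * R s) ((S.1ᵀ * R t) * skew (Ω t)) t) ∧
    (∀ t, HasDerivAt (fun s => mv S.1ᵀ (x s - S.2)) (mv (S.1ᵀ * R t) (v t)) t) ∧
    (∀ t, HasDerivAt v (-cross3 (Ω t) (v t) + a t - g • mv (S.1ᵀ * R t)ᵀ e3) t) ∧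
    (∀ i, ∀ t, HasDerivAt (fun s => mv S.1ᵀ (p i s - S.2)) 0 t) := by
  obtain ⟨hSO3, hSe3⟩ := hS
  refine ⟨fun t => hSO3.transpose_mul (hSO t), fun t => ?_, fun t => ?_, fun t => ?_,
    fun i t => ?_⟩
  · rw [Matrix.mul_assoc]
    exact (hR t).matrix_mul_left S.1ᵀ
  · rw [mv_mul]
    exact ((hx t).sub_const S.2).mv_left S.1ᵀ
  · rw [mv_transpose_transpose_mul, hSe3]
    exact hv t
  · rw [← mv_zero S.1ᵀ]
    exact ((hp i t).sub_const S.2).mv_left S.1ᵀ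
end
end

section
/- (Lemma 1, transitivity.) The action Φ is transitive on the VI-SLAM total space: for any two states (P, v, p₁, …, pₙ) and (P', v', p'₁, …, p'ₙ) satisfying (P T_C)⁻¹(pᵢ) ≠ 0 and (P' T_C)⁻¹(p'ᵢ) ≠ 0 for all i, there exists a group element (A, w, Q₁, …, Qₙ) ∈ G such that Φ((A, w, Qᵢ), (P, v, pᵢ)) = (P', v', p'ᵢ). -/
open scoped InnerProductSpace Matrix

noncomputable section

/-- Elements of SOT(3) are pairs `(R_Q, c_Q)`. -/
abbrev SOT3 := Mat3 × ℝ

/-- SOT(3) product `(R₁,c₁)·(R₂,c₂) = (R₁R₂, c₁c₂)`. -/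
def sotMul (Q1 Q2 : SOT3) : SOT3 := (Q1.1 * Q2.1, Q1.2 * Q2.2)

/-- SOT(3) inverse `(R_Qᵀ, c_Q⁻¹)`. -/
def sotInv (Q : SOT3) : SOT3 := (Q.1ᵀ, Q.2⁻¹)

/-- Action of SOT(3) on ℝ³: `Q(q) = c_Q R_Q q`. -/
def sotAct (Q : SOT3) (q : V3) : V3 := Q.2 • mv Q.1 q

/-- Elements of the VI-SLAM group `G = SE₂(3) × SOT(3)ⁿ`. -/
abbrev GVI (n : ℕ) := SE3 × V3 × (Fin n → SOT3)

/-- VI-SLAM group product. -/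
def gMul {n : ℕ} (X Y : GVI n) : GVI n :=
  (seMul X.1 Y.1, X.2.1 + mv X.1.1 Y.2.1, fun i => sotMul (X.2.2 i) (Y.2.2 i))

/-- VI-SLAM group identity `(I₄, 0, (I,1)ᵢ)`. -/
def gId {n : ℕ} : GVI n := (seId, 0, fun _ => (1, 1))

/-- VI-SLAM group inverse `(A⁻¹, −R_Aᵀw, Qᵢ⁻¹)`. -/
def gInv {n : ℕ} (X : GVI n) : GVI n :=
  (seInv X.1, -(mv X.1.1ᵀ X.2.1), fun i => sotInv (X.2.2 i))

/-- Membership in the VI-SLAM group: rotation parts in SO(3), scale parts positive. -/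
def gMem {n : ℕ} (X : GVI n) : Prop :=
  SO3 X.1.1 ∧ ∀ i, SO3 (X.2.2 i).1 ∧ 0 < (X.2.2 i).2

/-- The action `Φ((A, w, Qᵢ), (P, v, pᵢ)) = (PA, R_Aᵀ(v − w), (P A T_C)(Qᵢ⁻¹((P T_C)⁻¹(pᵢ))))`. -/
def Phi {n : ℕ} (TC : SE3) (X : GVI n) (ξ : SE3 × V3 × (Fin n → V3)) :
    SE3 × V3 × (Fin n → V3) :=
  (seMul ξ.1 X.1, mv X.1.1ᵀ (ξ.2.1 - X.2.1),
    fun i => seAct (seMul (seMul ξ.1 X.1) TC)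
      (sotAct (sotInv (X.2.2 i)) (seAct (seInv (seMul ξ.1 TC)) (ξ.2.2 i))))

/-! For the navigation part take `A = P⁻¹P'` and `w = v - R_A v'`. For the landmarks, the
camera-frame coordinates `aᵢ = (P T_C)⁻¹(pᵢ)` and `bᵢ = (P' T_C)⁻¹(p'ᵢ)` are nonzero, and SOT(3)
acts transitively on `ℝ³ ∖ {0}`: scale `bᵢ` by `‖aᵢ‖ / ‖bᵢ‖`, then rotate. Two vectors of equal
length are exchanged by a hyperplane reflection; composing with a second reflection that fixes
the target makes the map a rotation. -/

open Module Submodule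
open scoped RealInnerProductSpace

section Rotation

variable {E : Type*} [NormedAddCommGroup E] [InnerProductSpace ℝ E] [FiniteDimensional ℝ E]

theorem det_reflection_orthogonal_span_singleton {u : E} (hu : u ≠ 0) :
    LinearMap.det (ℝ ∙ u)ᗮ.reflection.toLinearMap = -1 := by
  rw [det_reflection, orthogonal_orthogonal, finrank_span_singleton hu, pow_one]

theorem exists_ne_zero_inner_eq_zero (hE : 2 ≤ finrank ℝ E) (w : E) :
    ∃ u : E, u ≠ 0 ∧ ⟪u, w⟫ = 0 := by
  have hpos : 0 < finrank ℝ (ℝ ∙ w)ᗮ := by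
    have := (ℝ ∙ w).finrank_add_finrank_orthogonal
    have : finrank ℝ (ℝ ∙ w) ≤ 1 := by simpa using finrank_span_le_card ({w} : Set E)
    omega
  obtain ⟨u, hu, hu0⟩ := exists_mem_ne_zero_of_ne_bot (one_le_finrank_iff.mp hpos)
  exact ⟨u, hu0, inner_eq_zero_symm.mp (mem_orthogonal_singleton_iff_inner_right.mp hu)⟩

theorem exists_linearIsometryEquiv_det_eq_one_apply_eq (hE : 2 ≤ finrank ℝ E) {v w : E}
    (h : ‖v‖ = ‖w‖) :
    ∃ f : E ≃ₗᵢ[ℝ] E, LinearMap.det (f : E →ₗ[ℝ] E) = 1 ∧ f v = w := by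
  obtain rfl | hvw := eq_or_ne v w
  · exact ⟨LinearIsometryEquiv.refl ℝ E, LinearMap.det_id, rfl⟩
  obtain ⟨u, hu, huw⟩ := exists_ne_zero_inner_eq_zero hE w
  refine ⟨(ℝ ∙ (v - w))ᗮ.reflection.trans (ℝ ∙ u)ᗮ.reflection, ?_, ?_⟩
  · change LinearMap.det ((ℝ ∙ u)ᗮ.reflection.toLinearMap ∘ₗ
      (ℝ ∙ (v - w))ᗮ.reflection.toLinearMap) = 1
    rw [LinearMap.det_comp, det_reflection_orthogonal_span_singleton hu,
      det_reflection_orthogonal_span_singleton (sub_ne_zero.mpr hvw)]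
    norm_num
  · rw [LinearIsometryEquiv.trans_apply, reflection_sub h]
    exact reflection_mem_subspace_eq_self (mem_orthogonal_singleton_iff_inner_right.mpr huw)

end Rotation

namespace SO3

variable {R S : Mat3}

theorem mul_transpose_self (hR : SO3 R) : R * Rᵀ = 1 :=
  mul_eq_one_comm.mp hR.1

theorem transpose (hR : SO3 R) : SO3 Rᵀ := by
  refine ⟨?_, by rw [Matrix.det_transpose, hR.2]⟩
  rw [Matrix.transpose_transpose]
  exact hR.mul_transpose_self

theorem mul (hR : SO3 R) (hS : SO3 S) : SO3 (R * S) := by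
  refine ⟨?_, by rw [Matrix.det_mul, hR.2, hS.2, one_mul]⟩
  rw [Matrix.transpose_mul, mul_assoc, ← mul_assoc Rᵀ, hR.1, one_mul, hS.1]

end SO3

section MatrixVector

variable (M N : Mat3) (x y : V3)

theorem mv_add : mv M (x + y) = mv M x + mv M y :=
  congrArg (WithLp.toLp 2) (Matrix.mulVec_add M x y)

theorem mv_neg : mv M (-x) = -mv M x :=
  congrArg (WithLp.toLp 2) (Matrix.mulVec_neg x M)

theorem mv_smul (r : ℝ) : mv M (r • x) = r • mv M x :=
  congrArg (WithLp.toLp 2) (Matrix.mulVec_smul M r x)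

theorem mv_mv : mv M (mv N x) = mv (M * N) x :=
  congrArg (WithLp.toLp 2) (Matrix.mulVec_mulVec x M N)

theorem mv_one : mv 1 x = x :=
  congrArg (WithLp.toLp 2) (Matrix.one_mulVec x)

end MatrixVector

theorem exists_SO3_mv_eq {v w : V3} (h : ‖v‖ = ‖w‖) : ∃ R : Mat3, SO3 R ∧ mv R v = w := by
  obtain ⟨f, hdet, hfv⟩ := exists_linearIsometryEquiv_det_eq_one_apply_eq (by simp) h
  let b := EuclideanSpace.basisFun (Fin 3) ℝ
  refine ⟨LinearMap.toMatrix b.toBasis b.toBasis f, ⟨?_, ?_⟩, ?_⟩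
  · exact (Matrix.mem_orthogonalGroup_iff' _ _).mp (f.toMatrix_mem_unitaryGroup b b)
  · rw [LinearMap.det_toMatrix, hdet]
  · change Matrix.toEuclideanLin _ v = w
    rw [Matrix.toEuclideanLin_eq_toLin_orthonormal, Matrix.toLin_toMatrix]
    exact hfv

theorem exists_sotAct_eq {a b : V3} (ha : a ≠ 0) (hb : b ≠ 0) :
    ∃ Q : SOT3, SO3 Q.1 ∧ 0 < Q.2 ∧ sotAct Q b = a := by
  have hc : 0 < ‖a‖ / ‖b‖ := div_pos (norm_pos_iff.mpr ha) (norm_pos_iff.mpr hb)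
  have hnorm : ‖(‖a‖ / ‖b‖) • b‖ = ‖a‖ := by
    rw [norm_smul, Real.norm_of_nonneg hc.le, div_mul_cancel₀ _ (norm_ne_zero_iff.mpr hb)]
  obtain ⟨R, hR, hRb⟩ := exists_SO3_mv_eq hnorm
  exact ⟨(R, ‖a‖ / ‖b‖), hR, hc, by rw [sotAct, ← mv_smul, hRb]⟩

theorem sotAct_sotInv_sotAct {Q : SOT3} (hQ : SO3 Q.1) (hc : Q.2 ≠ 0) (q : V3) :
    sotAct (sotInv Q) (sotAct Q q) = q := by
  rw [sotAct, sotAct, sotInv, mv_smul, mv_mv, hQ.1, mv_one, smul_smul, inv_mul_cancel₀ hc,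
    one_smul]

theorem seMul_seInv_cancel_left {S : SE3} (hS : S.1 * S.1ᵀ = 1) (T : SE3) :
    seMul S (seMul (seInv S) T) = T := by
  refine Prod.ext (by simp only [seMul, seInv, ← mul_assoc, hS, one_mul]) ?_
  simp only [seMul, seInv, mv_add, mv_neg, mv_mv, hS, mv_one]
  abel

theorem seAct_seInv_cancel {S : SE3} (hS : S.1 * S.1ᵀ = 1) (q : V3) :
    seAct S (seAct (seInv S) q) = q := by
  simp only [seAct, seInv, mv_add, mv_neg, mv_mv, hS, mv_one]
  abel

theorem Phi_transitive_general (n : ℕ) (TC : SE3) (hTC : SO3 TC.1)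
    (P P' : SE3) (hP : SO3 P.1) (hP' : SO3 P'.1) (v v' : V3) (p p' : Fin n → V3)
    (hp : ∀ i, seAct (seInv (seMul P TC)) (p i) ≠ 0)
    (hp' : ∀ i, seAct (seInv (seMul P' TC)) (p' i) ≠ 0) :
    ∃ X : GVI n, gMem X ∧ Phi TC X (P, v, p) = (P', v', p') := by
  choose Q hQ hc hQb using fun i => exists_sotAct_eq (hp i) (hp' i)
  set A := seMul (seInv P) P'
  have hA : SO3 A.1 := hP.transpose.mul hP'
  have hPA : seMul P A = P' := seMul_seInv_cancel_left hP.mul_transpose_self P'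
  refine ⟨(A, v - mv A.1 v', Q), ⟨hA, fun i => ⟨hQ i, hc i⟩⟩, ?_⟩
  simp only [Phi, hPA, Prod.mk.injEq, true_and]
  refine ⟨by rw [sub_sub_cancel, mv_mv, hA.1, mv_one], funext fun i => ?_⟩
  rw [← hQb i, sotAct_sotInv_sotAct (hQ i) (hc i).ne']
  exact seAct_seInv_cancel (hP'.mul hTC).mul_transpose_self (p' i)

/-- (Lemma 1, transitivity.) The action `Φ` is transitive on the
VI-SLAM total space. -/
theorem Phi_transitive (n : ℕ) (hn : 1 ≤ n) (TC : SE3) (hTC : SO3 TC.1)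
    (P P' : SE3) (hP : SO3 P.1) (hP' : SO3 P'.1) (v v' : V3) (p p' : Fin n → V3)
    (hp : ∀ i, seAct (seInv (seMul P TC)) (p i) ≠ 0)
    (hp' : ∀ i, seAct (seInv (seMul P' TC)) (p' i) ≠ 0) :
    ∃ X : GVI n, gMem X ∧ Phi TC X (P, v, p) = (P', v', p') :=
  Phi_transitive_general n TC hTC P P' hP hP' v v' p p' hp hp'
end
end

section
/- (Lemma 2, part 2: output equivariance.) For every group element (A, w, Q₁, …, Qₙ) ∈ G, every state (P, v, pᵢ) with (P T_C)⁻¹(p_k) ≠ 0 for all k, and every index k, one has π_{S²}( ((PA) T_C)⁻¹ ( (P A T_C)( Q_k⁻¹( (P T_C)⁻¹(p_k) ) ) ) ) = R_{Q_k}ᵀ π_{S²}( (P T_C)⁻¹(p_k) ); that is, the measurement function h is equivariant with respect to the actions Φ and ρ: h(Φ(X, ξ)) = ρ(X, h(ξ)). -/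
open scoped InnerProductSpace Matrix

noncomputable section

/-- Sphere projection `π_{S²}(q) = q/‖q‖`. -/
def piS (q : V3) : V3 := ‖q‖⁻¹ • q

/-- The measurement function `h^k(P, v, pᵢ) = π_{S²}((P T_C)⁻¹(p_k))`. -/
def hMeas {n : ℕ} (TC : SE3) (ξ : SE3 × V3 × (Fin n → V3)) : Fin n → V3 :=
  fun k => piS (seAct (seInv (seMul ξ.1 TC)) (ξ.2.2 k))

/-- The output action `ρ((A, w, Qᵢ), (ηᵢ)) = (R_{Qᵢ}ᵀ ηᵢ)`. -/
def rho {n : ℕ} (X : GVI n) (η : Fin n → V3) : Fin n → V3 :=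
  fun i => mv (X.2.2 i).1ᵀ (η i)


/-! With `q = (P T_C)⁻¹(p_k)`, the transformed landmark is `(P A T_C)(Q_k⁻¹ q)`, so applying
`(P A T_C)⁻¹` returns `Q_k⁻¹ q = c_k⁻¹ R_{Q_k}ᵀ q`. The projection `π_{S²}` ignores the positive
factor `c_k⁻¹` and commutes with the rotation `R_{Q_k}ᵀ`, which is linear and preserves norms. -/

open Matrix

lemma SO3.mem_orthogonalGroup {R : Mat3} (hR : SO3 R) : R ∈ orthogonalGroup (Fin 3) ℝ :=
  (mem_orthogonalGroup_iff' _ _).2 hR.1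

lemma mv_smul_s11 (M : Mat3) (c : ℝ) (q : V3) : mv M (c • q) = c • mv M q := by
  simp only [mv, WithLp.ofLp_smul, mulVec_smul, WithLp.toLp_smul]

lemma norm_mv_of_mem_orthogonalGroup {A : Mat3} (hA : A ∈ orthogonalGroup (Fin 3) ℝ) (q : V3) :
    ‖mv A q‖ = ‖q‖ := by
  have hdot : A *ᵥ q ⬝ᵥ A *ᵥ q = q ⬝ᵥ q := by
    rw [dotProduct_mulVec, vecMul_mulVec, (mem_orthogonalGroup_iff' _ _).1 hA, vecMul_one]
  rw [EuclideanSpace.norm_eq, EuclideanSpace.norm_eq]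
  simpa [mv, dotProduct, pow_two] using congrArg Real.sqrt hdot

lemma piS_mv_of_mem_orthogonalGroup {A : Mat3} (hA : A ∈ orthogonalGroup (Fin 3) ℝ) (q : V3) :
    piS (mv A q) = mv A (piS q) := by
  rw [piS, piS, norm_mv_of_mem_orthogonalGroup hA, mv_smul_s11]

lemma piS_smul_of_pos {c : ℝ} (hc : 0 < c) (q : V3) : piS (c • q) = piS q := by
  rw [piS, piS, norm_smul, Real.norm_of_nonneg hc.le, smul_smul, _root_.mul_inv_rev, mul_assoc,
    inv_mul_cancel₀ hc.ne', mul_one]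

lemma piS_sotAct {Q : SOT3} (hR : Q.1 ∈ orthogonalGroup (Fin 3) ℝ) (hc : 0 < Q.2) (q : V3) :
    piS (sotAct Q q) = mv Q.1 (piS q) := by
  rw [sotAct, piS_smul_of_pos hc, piS_mv_of_mem_orthogonalGroup hR]

lemma piS_sotAct_sotInv {Q : SOT3} (hR : Q.1 ∈ orthogonalGroup (Fin 3) ℝ) (hc : 0 < Q.2)
    (q : V3) : piS (sotAct (sotInv Q) q) = mv Q.1ᵀ (piS q) :=
  piS_sotAct (transpose_mem_unitaryGroup_iff.2 hR) (inv_pos.2 hc) q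

lemma seAct_seInv_seAct {S : SE3} (hS : S.1 ∈ orthogonalGroup (Fin 3) ℝ) (x : V3) :
    seAct (seInv S) (seAct S x) = x := by
  simp only [seAct, seInv, mv, WithLp.ofLp_add, mulVec_add, mulVec_mulVec,
    (mem_orthogonalGroup_iff' _ _).1 hS, one_mulVec,
    WithLp.toLp_add, WithLp.toLp_ofLp, add_neg_cancel_right]

theorem output_equivariance_general (n : ℕ) (TC : SE3) (hTC : SO3 TC.1)
    (X : GVI n) (hX : gMem X)
    (P : SE3) (hP : SO3 P.1) (v : V3) (p : Fin n → V3) :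
    (∀ k : Fin n,
      piS (seAct (seInv (seMul (seMul P X.1) TC))
          (seAct (seMul (seMul P X.1) TC)
            (sotAct (sotInv (X.2.2 k)) (seAct (seInv (seMul P TC)) (p k)))))
        = mv (X.2.2 k).1ᵀ (piS (seAct (seInv (seMul P TC)) (p k)))) ∧
    hMeas TC (Phi TC X (P, v, p)) = rho X (hMeas TC (P, v, p)) := by
  have hPATC : (seMul (seMul P X.1) TC).1 ∈ orthogonalGroup (Fin 3) ℝ :=
    mul_mem (mul_mem hP.mem_orthogonalGroup hX.1.mem_orthogonalGroup) hTC.mem_orthogonalGroup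
  have key (k : Fin n) : hMeas TC (Phi TC X (P, v, p)) k = rho X (hMeas TC (P, v, p)) k := by
    simp only [hMeas, Phi, rho]
    rw [seAct_seInv_seAct hPATC, piS_sotAct_sotInv (hX.2 k).1.mem_orthogonalGroup (hX.2 k).2]
  exact ⟨key, funext key⟩

/-- (Lemma 2, part 2: output equivariance.)
`π_{S²}(((PA)T_C)⁻¹((P A T_C)(Q_k⁻¹((P T_C)⁻¹(p_k))))) = R_{Q_k}ᵀ π_{S²}((P T_C)⁻¹(p_k))`;
that is, `h(Φ(X, ξ)) = ρ(X, h(ξ))`. -/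
theorem output_equivariance (n : ℕ) (hn : 1 ≤ n) (TC : SE3) (hTC : SO3 TC.1)
    (X : GVI n) (hX : gMem X)
    (P : SE3) (hP : SO3 P.1) (v : V3) (p : Fin n → V3)
    (hp : ∀ k, seAct (seInv (seMul P TC)) (p k) ≠ 0) :
    (∀ k : Fin n,
      piS (seAct (seInv (seMul (seMul P X.1) TC))
          (seAct (seMul (seMul P X.1) TC)
            (sotAct (sotInv (X.2.2 k)) (seAct (seInv (seMul P TC)) (p k)))))
        = mv (X.2.2 k).1ᵀ (piS (seAct (seInv (seMul P TC)) (p k)))) ∧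
    hMeas TC (Phi TC X (P, v, p)) = rho X (hMeas TC (P, v, p)) :=
  output_equivariance_general n TC hTC X hX P hP v p
end
end
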